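/- Let ŵ ∈ ℝ^d satisfy ∇L(ŵ) = 0 (in particular, this holds if ŵ is a global minimizer of L). Then ∇L(P_k ŵ) = −(1/N₁) ∑_{i∈S} ( x_i − m_i(P_k ŵ) ) + (1/N₁) ∑_{i∈S} P_k ( x_i − m_i(ŵ) ). (Identity (L) in the proof of Theorem 1: the λ₂-terms and λ₃-terms in ∇L(P_k ŵ) − P_k ∇L(ŵ) cancel exactly.) -/

import Mathlib

open scoped RealInnerProductSpace BigOperators

/-!
Let `g` be the gradient of the partial log-likelihood. Because `P_k` is a self-adjoint
idempotent, `∇L(u) = -(1/N₁) g(u) - (λ₂/N₁) P_k g(P_k u) + λ₃ u`. Applying `P_k` to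
`∇L(ŵ) = 0` and using `P_k² = P_k` shows that the `λ₂`- and `λ₃`-terms of `∇L(P_k ŵ)` equal
`(1/N₁) P_k g(ŵ)`.
-/

section Gradient

variable {ι E : Type*} [NormedAddCommGroup E] [InnerProductSpace ℝ E] [CompleteSpace E]

theorem hasGradientAt_iff_hasFDerivAt_innerSL {f : E → ℝ} {g u : E} :
    HasGradientAt f g u ↔ HasFDerivAt f (innerSL ℝ g) u :=
  hasGradientAt_iff_hasFDerivAt

noncomputable def softmaxMean (x : ι → E) (R : Finset ι) (u : E) : E :=
  (∑ j ∈ R, Real.exp ⟪x j, u⟫)⁻¹ • ∑ j ∈ R, Real.exp ⟪x j, u⟫ • x j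

theorem hasGradientAt_log_sum_exp_inner (x : ι → E) (R : Finset ι) (u : E) :
    HasGradientAt (fun v => Real.log (∑ j ∈ R, Real.exp ⟪x j, v⟫)) (softmaxMean x R u) u := by
  -- for `R = ∅` both sides are junk zeros: `log 0 = 0` and `0⁻¹ = 0`
  rcases R.eq_empty_or_nonempty with rfl | hR
  · simpa [softmaxMean] using hasGradientAt_const (x := u) (0 : ℝ)
  have hpos : 0 < ∑ j ∈ R, Real.exp ⟪x j, u⟫ :=
    Finset.sum_pos (fun j _ => Real.exp_pos _) hR
  have hsum : HasFDerivAt (fun v => ∑ j ∈ R, Real.exp ⟪x j, v⟫)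
      (∑ j ∈ R, Real.exp ⟪x j, u⟫ • innerSL ℝ (x j)) u :=
    HasFDerivAt.fun_sum fun j _ => (innerSL ℝ (x j)).hasFDerivAt.exp
  rw [hasGradientAt_iff_hasFDerivAt_innerSL]
  convert hsum.log hpos.ne' using 1
  ext v
  simp [softmaxMean]

noncomputable def partialLogLik (x : ι → E) (S : Finset ι) (R : ι → Finset ι) (v : E) : ℝ :=
  ∑ i ∈ S, (⟪x i, v⟫ - Real.log (∑ j ∈ R i, Real.exp ⟪x j, v⟫))

theorem hasGradientAt_partialLogLik (x : ι → E) (S : Finset ι) (R : ι → Finset ι) (u : E) :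
    HasGradientAt (partialLogLik x S R) (∑ i ∈ S, (x i - softmaxMean x (R i) u)) u := by
  rw [hasGradientAt_iff_hasFDerivAt_innerSL, map_sum]
  refine HasFDerivAt.fun_sum fun i _ => ?_
  rw [map_sub]
  exact (innerSL ℝ (x i)).hasFDerivAt.sub
    (hasGradientAt_iff_hasFDerivAt_innerSL.mp (hasGradientAt_log_sum_exp_inner x (R i) u))

theorem HasGradientAt.comp_isSelfAdjoint {f : E → ℝ} {g u : E} {P : E →L[ℝ] E}
    (hP : IsSelfAdjoint P) (hf : HasGradientAt f g (P u)) :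
    HasGradientAt (fun w => f (P w)) (P g) u := by
  rw [hasGradientAt_iff_hasFDerivAt_innerSL] at hf ⊢
  rw [← ContinuousLinearMap.innerSL_apply_comp_of_isSymmetric g hP.isSymmetric]
  exact hf.comp u P.hasFDerivAt

theorem hasGradientAt_add_comp_add_sq_norm {f : E → ℝ} {g : E → E}
    (hf : ∀ u, HasGradientAt f (g u) u) {P : E →L[ℝ] E} (hP : IsSelfAdjoint P)
    (a b c : ℝ) (u : E) :
    HasGradientAt (fun w => a * f w + b * f (P w) + c / 2 * ‖w‖ ^ 2)
      (a • g u + b • P (g (P u)) + c • u) u := by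
  have h1 := hasGradientAt_iff_hasFDerivAt_innerSL.mp (hf u)
  have h2 := hasGradientAt_iff_hasFDerivAt_innerSL.mp ((hf (P u)).comp_isSelfAdjoint hP)
  have hsq := (hasStrictFDerivAt_norm_sq u).hasFDerivAt
  rw [hasGradientAt_iff_hasFDerivAt_innerSL]
  refine (((h1.const_mul a).fun_add (h2.const_mul b)).fun_add
    (hsq.const_mul (c / 2))).congr_fderiv ?_
  ext v
  simp only [add_apply, smul_apply, innerSL_apply_apply, map_add, map_smul, smul_eq_mul,
    nsmul_eq_mul]
  ring

end Gradient

theorem IsIdempotentElem.eq_smul_sub_map_of_eq_zero {R V : Type*} [CommRing R] [AddCommGroup V]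
    [Module R V] [TopologicalSpace V] {P : V →L[R] V} (hP : IsIdempotentElem P) (g : V → V)
    (a b c : R) {w : V} (hw : a • g w + b • P (g (P w)) + c • w = 0) :
    a • g (P w) + b • P (g (P (P w))) + c • P w = a • (g (P w) - P (g w)) := by
  have hPP (v : V) : P (P v) = P v := congr($hP v)
  have hPw : a • P (g w) + b • P (g (P w)) + c • P w = 0 := by
    simpa [hPP] using congr(P $hw)
  rw [hPP]
  linear_combination (norm := module) hPw

section CoordMask

variable {n : Type*} [Fintype n] [DecidableEq n]

noncomputable def coordMask (K : Finset n) : EuclideanSpace ℝ n →L[ℝ] EuclideanSpace ℝ n :=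
  Matrix.toEuclideanCLM (n := n) (𝕜 := ℝ) (Matrix.diagonal fun a => if a ∈ K then 1 else 0)

theorem coordMask_apply (K : Finset n) (w : EuclideanSpace ℝ n) (a : n) :
    coordMask K w a = if a ∈ K then w a else 0 := by
  simp [coordMask, Matrix.mulVec_diagonal]

theorem isStarProjection_coordMask (K : Finset n) : IsStarProjection (coordMask K) where
  isIdempotentElem := by
    refine IsIdempotentElem.map ?_ _
    refine IsIdempotentElem.map (f := Matrix.diagonalRingHom n ℝ) ?_
    ext a
    by_cases h : a ∈ K <;> simp [h]
  isSelfAdjoint := (Matrix.isHermitian_diagonal _).isSelfAdjoint.map _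

end CoordMask

theorem excel_gradient_identity_general
    (N d : ℕ) (x : Fin N → EuclideanSpace ℝ (Fin d))
    (S : Finset (Fin N)) (N₁ : ℕ) (R : Fin N → Finset (Fin N)) (K : Finset (Fin d))
    (P : EuclideanSpace ℝ (Fin d) → EuclideanSpace ℝ (Fin d))
    (hP : ∀ w (a : Fin d), P w a = if a ∈ K then w a else 0)
    (lam2 lam3 : ℝ)
    (L : EuclideanSpace ℝ (Fin d) → ℝ)
    (hL : ∀ w, L w =
      -(1 / (N₁ : ℝ)) * ∑ i ∈ S, (⟪x i, w⟫ - Real.log (∑ j ∈ R i, Real.exp ⟪x j, w⟫))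
      - lam2 / (N₁ : ℝ) * ∑ i ∈ S, (⟪x i, P w⟫ - Real.log (∑ j ∈ R i, Real.exp ⟪x j, P w⟫))
      + lam3 / 2 * ‖w‖ ^ 2)
    (m : EuclideanSpace ℝ (Fin d) → Fin N → EuclideanSpace ℝ (Fin d))
    (hm : ∀ u i, m u i =
      (∑ j ∈ R i, Real.exp ⟪x j, u⟫)⁻¹ • ∑ j ∈ R i, Real.exp ⟪x j, u⟫ • x j)
    (wh : EuclideanSpace ℝ (Fin d)) (hgrad : gradient L wh = 0) :
    gradient L (P wh) =
      -((1 / (N₁ : ℝ)) • ∑ i ∈ S, (x i - m (P wh) i))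
        + (1 / (N₁ : ℝ)) • ∑ i ∈ S, P (x i - m wh i) := by
  obtain rfl : P = coordMask K :=
    funext fun w => PiLp.ext fun a => by rw [hP, coordMask_apply]
  obtain rfl : m = fun u i => softmaxMean x (R i) u := funext₂ hm
  obtain rfl : L = fun w => -(1 / (N₁ : ℝ)) * partialLogLik x S R w
      + -(lam2 / N₁) * partialLogLik x S R (coordMask K w) + lam3 / 2 * ‖w‖ ^ 2 := by
    funext w
    rw [hL]
    unfold partialLogLik
    ring
  have hPK := isStarProjection_coordMask K
  have hgradL := hasGradientAt_add_comp_add_sq_norm (hasGradientAt_partialLogLik x S R)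
    hPK.isSelfAdjoint (-(1 / (N₁ : ℝ))) (-(lam2 / N₁)) lam3
  rw [(hgradL wh).gradient] at hgrad
  rw [(hgradL _).gradient]
  refine (hPK.isIdempotentElem.eq_smul_sub_map_of_eq_zero
    (fun u => ∑ i ∈ S, (x i - softmaxMean x (R i) u)) _ _ _ hgrad).trans ?_
  rw [← map_sum]
  module

/-- Identity (L) in the proof of Theorem 1. -/
theorem excel_gradient_identity
    (N d k : ℕ) (hN : 0 < N) (hd : 0 < d) (hk : 0 < k) (hkd : k ≤ d)
    (x : Fin N → EuclideanSpace ℝ (Fin d))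
    (E : Fin N → ℕ) (hE : ∀ i, E i = 0 ∨ E i = 1)
    (T : Fin N → ℝ)
    (S : Finset (Fin N)) (hS : S = Finset.univ.filter fun i => E i = 1)
    (hSne : S.Nonempty)
    (N₁ : ℕ) (hN₁ : N₁ = S.card)
    (R : Fin N → Finset (Fin N))
    (hR : ∀ i, R i = Finset.univ.filter fun j => T i ≤ T j)
    (K : Finset (Fin d)) (hK : K.card = k)
    (P : EuclideanSpace ℝ (Fin d) → EuclideanSpace ℝ (Fin d))
    (hP : ∀ w (a : Fin d), P w a = if a ∈ K then w a else 0)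
    (lam2 lam3 : ℝ) (hlam2 : 0 < lam2) (hlam3 : 0 < lam3)
    (L : EuclideanSpace ℝ (Fin d) → ℝ)
    (hL : ∀ w, L w =
      -(1 / (N₁ : ℝ)) * ∑ i ∈ S, (⟪x i, w⟫ - Real.log (∑ j ∈ R i, Real.exp ⟪x j, w⟫))
      - lam2 / (N₁ : ℝ) * ∑ i ∈ S, (⟪x i, P w⟫ - Real.log (∑ j ∈ R i, Real.exp ⟪x j, P w⟫))
      + lam3 / 2 * ‖w‖ ^ 2)
    (m : EuclideanSpace ℝ (Fin d) → Fin N → EuclideanSpace ℝ (Fin d))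
    (hm : ∀ u i, m u i =
      (∑ j ∈ R i, Real.exp ⟪x j, u⟫)⁻¹ • ∑ j ∈ R i, Real.exp ⟪x j, u⟫ • x j)
    (wh : EuclideanSpace ℝ (Fin d)) (hgrad : gradient L wh = 0) :
    gradient L (P wh) =
      -((1 / (N₁ : ℝ)) • ∑ i ∈ S, (x i - m (P wh) i))
        + (1 / (N₁ : ℝ)) • ∑ i ∈ S, P (x i - m wh i) :=
  excel_gradient_identity_general N d x S N₁ R K P hP lam2 lam3 L hL m hm wh hgrad
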